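/- arXiv:math/9508219 — 6 statements merged into one kernel-verified Lean document; each statement's English description precedes it below -/
import Mathlib

section
/- Every binary linear [21,5,10] code has no codeword of odd weight; that is, every [21,5,10] code is even. -/
/-!
If `C` contained an odd word, parity would be a nonzero homomorphism `C → ZMod 2`, so exactly 16
of the 32 codewords would be odd. Each coordinate is likewise nonzero on at most half of `C`, so
the weights of all codewords sum to at most `21 * 16 = 336`. No codeword has weight 11, so the 16
odd words have weight at least 13 and the remaining 15 nonzero words weight at least 10, which
already sums to `358`.
-/

open Finset

namespace BinaryCode

section Weights

variable {ι : Type*}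

def wtOn (T : Finset ι) (y : ι → ZMod 2) : ℕ := #{i ∈ T | y i ≠ 0}

/-- Restricting a code to `residual univ x` gives its residual code with respect to `x`. -/
def residual (T : Finset ι) (x : ι → ZMod 2) : Finset ι := {i ∈ T | x i = 0}

lemma wtOn_univ [Fintype ι] (y : ι → ZMod 2) : wtOn univ y = hammingNorm y := rfl

lemma card_residual_add_wtOn (T : Finset ι) (x : ι → ZMod 2) :
    #(residual T x) + wtOn T x = #T :=
  card_filter_add_card_filter_not _

lemma wtOn_add_wtOn_add (T : Finset ι) (x y : ι → ZMod 2) :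
    wtOn T y + wtOn T (x + y) = wtOn T x + 2 * wtOn (residual T x) y := by
  have key : ∀ a b : ZMod 2, (if b ≠ 0 then 1 else 0) + (if a + b ≠ 0 then 1 else 0) =
      (if a ≠ 0 then 1 else 0) + 2 * (if a = 0 ∧ b ≠ 0 then 1 else 0) := by decide
  simp only [wtOn, residual, filter_filter, card_filter, ← sum_add_distrib, mul_sum]
  exact sum_congr rfl fun i _ => key (x i) (y i)

lemma natCast_hammingNorm [Fintype ι] (y : ι → ZMod 2) :
    (hammingNorm y : ZMod 2) = ∑ i, y i := by
  have key : ∀ a : ZMod 2, (if a ≠ 0 then 1 else 0) = a := by decide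
  rw [hammingNorm, natCast_card_filter]
  exact sum_congr rfl fun i _ => key (y i)

end Weights

section HomToZModTwo

variable {G : Type*} [AddCommGroup G] [Fintype G] (φ : G →+ ZMod 2)

lemma two_mul_card_ne_zero_eq_card {g₀ : G} (hg₀ : φ g₀ ≠ 0) :
    2 * #{g | φ g ≠ 0} = Fintype.card G := by
  have hadd : ∀ a b : ZMod 2, a ≠ 0 → b = 0 → a + b ≠ 0 := by decide
  have hsub : ∀ a b : ZMod 2, a ≠ 0 → b ≠ 0 → -a + b = 0 := by decide
  have hbij : #{g | φ g = 0} = #{g | φ g ≠ 0} := by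
    refine card_nbij' (g₀ + ·) (-g₀ + ·) ?_ ?_ (fun g _ => by simp) (fun g _ => by simp)
    · intro g hg
      simp only [coe_filter, Set.mem_ofPred_eq, mem_univ, true_and, map_add] at hg ⊢
      exact hadd _ _ hg₀ hg
    · intro g hg
      simp only [coe_filter, Set.mem_ofPred_eq, mem_univ, true_and, map_add, map_neg] at hg ⊢
      exact hsub _ _ hg₀ hg
  have := card_filter_add_card_filter_not (s := univ) (fun g => φ g = 0)
  rw [card_univ] at this
  simp only [ne_eq] at hbij ⊢
  omega

lemma two_mul_card_ne_zero_le_card : 2 * #{g | φ g ≠ 0} ≤ Fintype.card G := by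
  by_cases h : ∃ g₀, φ g₀ ≠ 0
  · exact (two_mul_card_ne_zero_eq_card φ h.choose_spec).le
  · push Not at h
    simp [h]

end HomToZModTwo

section Code

variable {ι : Type*} (C : Submodule (ZMod 2) (ι → ZMod 2)) [Fintype C]

lemma two_mul_sum_wtOn_le (T : Finset ι) :
    2 * ∑ y : C, wtOn T y ≤ #T * Fintype.card C := by
  have hcoord (i : ι) : 2 * #{y : C | (y : ι → ZMod 2) i ≠ 0} ≤ Fintype.card C :=
    two_mul_card_ne_zero_le_card ((LinearMap.proj i).comp C.subtype).toAddMonoidHom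
  calc 2 * ∑ y : C, wtOn T y = ∑ i ∈ T, 2 * #{y : C | (y : ι → ZMod 2) i ≠ 0} := by
        simp only [wtOn, card_filter, mul_sum]
        rw [sum_comm]
    _ ≤ ∑ _i ∈ T, Fintype.card C := sum_le_sum fun i _ => hcoord i
    _ = #T * Fintype.card C := by rw [sum_const, smul_eq_mul]

lemma exists_notMem_two_mul_card_sub_mul_wtOn_le [DecidableEq C] (T : Finset ι) (D : Finset C)
    (m : ℕ) (hD : #D ≤ m) (hm : m < Fintype.card C) :
    ∃ y ∉ D, 2 * (Fintype.card C - m) * wtOn T y ≤ #T * Fintype.card C := by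
  have hDc : #Dᶜ = Fintype.card C - #D := card_compl D
  have hsum : ∑ y ∈ Dᶜ, 2 * (Fintype.card C - m) * wtOn T y ≤
      ∑ _y ∈ Dᶜ, #T * Fintype.card C := calc
    ∑ y ∈ Dᶜ, 2 * (Fintype.card C - m) * wtOn T y
        = (Fintype.card C - m) * (2 * ∑ y ∈ Dᶜ, wtOn T y) := by rw [← mul_sum]; ring
    _ ≤ (Fintype.card C - #D) * (#T * Fintype.card C) :=
      Nat.mul_le_mul (by omega) <| (Nat.mul_le_mul_left 2 <|
        sum_le_univ_sum_of_nonneg fun _ => Nat.zero_le _).trans (two_mul_sum_wtOn_le C T)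
    _ = ∑ _y ∈ Dᶜ, #T * Fintype.card C := by rw [sum_const, smul_eq_mul, hDc]
  obtain ⟨y, hy, hle⟩ := exists_le_of_sum_le (card_pos.mp (by omega)) hsum
  exact ⟨y, mem_compl.mp hy, hle⟩

lemma two_mul_card_odd_eq_card [Fintype ι] {v : ι → ZMod 2} (hv : v ∈ C)
    (hodd : Odd (hammingNorm v)) :
    2 * #{y : C | Odd (hammingNorm (y : ι → ZMod 2))} = Fintype.card C := by
  let φ : C →+ ZMod 2 := (∑ i, LinearMap.proj i ∘ₗ C.subtype).toAddMonoidHom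
  have hφ (y : C) : φ y ≠ 0 ↔ Odd (hammingNorm (y : ι → ZMod 2)) := by
    simp [φ, ← natCast_hammingNorm, ZMod.natCast_eq_zero_iff_even]
  simp only [← hφ]
  exact two_mul_card_ne_zero_eq_card φ (g₀ := ⟨v, hv⟩) ((hφ _).mpr hodd)

lemma le_sum_hammingNorm [Fintype ι] (d e : ℕ)
    (hmin : ∀ y : C, y ≠ 0 → d ≤ hammingNorm (y : ι → ZMod 2))
    (hodd : ∀ y : C, Odd (hammingNorm (y : ι → ZMod 2)) → d + e ≤ hammingNorm (y : ι → ZMod 2)) :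
    d * (Fintype.card C - 1) + e * #{y : C | Odd (hammingNorm (y : ι → ZMod 2))} ≤
      ∑ y : C, hammingNorm (y : ι → ZMod 2) := by
  classical
  have hpoint (y : C) : d * (if y ≠ 0 then 1 else 0) +
      e * (if Odd (hammingNorm (y : ι → ZMod 2)) then 1 else 0) ≤ hammingNorm (y : ι → ZMod 2) := by
    by_cases hy : y = 0
    · subst hy; simp
    · by_cases ho : Odd (hammingNorm (y : ι → ZMod 2))
      · simpa [hy, ho] using hodd y ho
      · simpa [hy, ho] using hmin y hy
  have hne : #{y : C | y ≠ 0} = Fintype.card C - 1 := by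
    rw [filter_ne' univ (0 : C), card_erase_of_mem (mem_univ _), card_univ]
  calc d * (Fintype.card C - 1) + e * #{y : C | Odd (hammingNorm (y : ι → ZMod 2))}
      = ∑ y : C, (d * (if y ≠ 0 then 1 else 0) +
          e * (if Odd (hammingNorm (y : ι → ZMod 2)) then 1 else 0)) := by
        rw [sum_add_distrib, ← mul_sum, ← mul_sum, ← card_filter, ← card_filter, hne]
    _ ≤ _ := sum_le_sum fun y _ => hpoint y

/-- If `x` had weight 11, every codeword other than `0, x` would have weight at least 5 on the 10
coordinates where `x` vanishes; averaging yields such a `z` of weight exactly 5 there. Then the 28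
codewords outside `{0, x, z, x + z}` have weight at least 3 on the 5 coordinates where both `x` and
`z` vanish, more than the average bound `5 * 16` allows. -/
lemma hammingNorm_ne_eleven [Fintype ι] (hι : Fintype.card ι = 21)
    (hC : Fintype.card C = 32) (hmin : ∀ y : C, y ≠ 0 → 10 ≤ hammingNorm (y : ι → ZMod 2))
    (x : C) : hammingNorm (x : ι → ZMod 2) ≠ 11 := by
  classical
  intro hx
  have add_ne_zero {a b : C} (h : a ≠ b) : a + b ≠ 0 := fun h' =>
    h (by rw [← sub_eq_zero, ZModModule.sub_eq_add, h'])
  set T₁ := residual univ (x : ι → ZMod 2)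
  have hT₁ : #T₁ = 10 := by
    have : #T₁ + hammingNorm (x : ι → ZMod 2) = Fintype.card ι :=
      card_residual_add_wtOn univ (x : ι → ZMod 2)
    omega
  have hres₁ (y : C) (hy0 : y ≠ 0) (hyx : y ≠ x) : 5 ≤ wtOn T₁ y := by
    have h : hammingNorm (y : ι → ZMod 2) + hammingNorm (x + y : ι → ZMod 2) =
        hammingNorm (x : ι → ZMod 2) + 2 * wtOn T₁ y :=
      wtOn_add_wtOn_add univ (x : ι → ZMod 2) y
    have h₁ := hmin y hy0
    have h₂ := hmin (x + y) (add_ne_zero (Ne.symm hyx))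
    rw [Submodule.coe_add] at h₂
    omega
  obtain ⟨z, hz, hzT₁⟩ :=
    exists_notMem_two_mul_card_sub_mul_wtOn_le C T₁ {0, x} 2 card_le_two (by omega)
  simp only [mem_insert, mem_singleton, not_or] at hz
  have hz5 : wtOn T₁ z = 5 := by
    have := hres₁ z hz.1 hz.2
    rw [hC, hT₁] at hzT₁
    omega
  set T₂ := residual T₁ (z : ι → ZMod 2)
  have hT₂ : #T₂ = 5 := by
    have : #T₂ + wtOn T₁ z = #T₁ := card_residual_add_wtOn T₁ (z : ι → ZMod 2)
    omega
  have hres₂ (y : C) (hy : y ∉ ({0, x, z, x + z} : Finset C)) : 3 ≤ wtOn T₂ y := by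
    simp only [mem_insert, mem_singleton, not_or] at hy
    obtain ⟨hy0, hyx, hyz, hyxz⟩ := hy
    have h : wtOn T₁ y + wtOn T₁ (z + y : ι → ZMod 2) = wtOn T₁ z + 2 * wtOn T₂ y :=
      wtOn_add_wtOn_add T₁ (z : ι → ZMod 2) y
    have h₁ := hres₁ y hy0 hyx
    have h₂ := hres₁ (z + y) (add_ne_zero (Ne.symm hyz)) fun h =>
      hyxz (by rw [← h, add_comm z y, add_assoc, ZModModule.add_self, add_zero])
    rw [Submodule.coe_add] at h₂
    omega
  obtain ⟨y, hy, hyT₂⟩ :=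
    exists_notMem_two_mul_card_sub_mul_wtOn_le C T₂ {0, x, z, x + z} 4 card_le_four (by omega)
  have := hres₂ y hy
  rw [hC, hT₂] at hyT₂
  omega

end Code

end BinaryCode

open BinaryCode in
/-- Every binary linear [21,5,10] code is even: no codeword has odd weight. -/
theorem even_21_5_10
    (C : Submodule (ZMod 2) (Fin 21 → ZMod 2))
    (hdim : Module.finrank (ZMod 2) C = 5)
    (hmin : ∀ v ∈ C, v ≠ 0 → 10 ≤ hammingNorm v) :
    ∀ v ∈ C, Even (hammingNorm v) := by
  classical
  intro v hv
  by_contra hv_even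
  have hv_odd : Odd (hammingNorm v) := Nat.not_even_iff_odd.mp hv_even
  have hC : Fintype.card C = 32 := by
    rw [Module.card_eq_pow_finrank (K := ZMod 2), hdim, ZMod.card]; rfl
  have hminC (y : C) (hy : y ≠ 0) : 10 ≤ hammingNorm (y : Fin 21 → ZMod 2) :=
    hmin y y.2 (by simpa using hy)
  have hodd (y : C) (hy : Odd (hammingNorm (y : Fin 21 → ZMod 2))) :
      10 + 3 ≤ hammingNorm (y : Fin 21 → ZMod 2) := by
    have h₁ := hminC y (by rintro rfl; simp at hy)
    have h₂ := hammingNorm_ne_eleven C (Fintype.card_fin 21) hC hminC y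
    obtain ⟨k, hk⟩ := hy
    omega
  have hupper := two_mul_sum_wtOn_le C (univ : Finset (Fin 21))
  have hlower := le_sum_hammingNorm C 10 3 hminC hodd
  have hhalf := two_mul_card_odd_eq_card C hv hv_odd
  simp only [wtOn_univ, card_univ, Fintype.card_fin, hC] at hupper hlower hhalf
  omega
end

section
/- Every binary linear [21,5,10] code contains a codeword of Hamming weight exactly 10. -/
/-!
Plotkin's averaging argument. In a binary linear code every coordinate is nonzero on at most
half of the codewords (translating by a codeword with a `1` there swaps the two halves), so the
32 codewords have total weight at most `21 * 16 = 336`. If no codeword had weight 10, the 31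
nonzero ones would each have weight at least 11, for a total of at least `341`.
-/

open Finset

theorem AddMonoidHom.two_mul_card_ne_zero_le {G : Type*} [AddGroup G] [Fintype G]
    (f : G →+ ZMod 2) : 2 * #{g | f g ≠ 0} ≤ Fintype.card G := by
  suffices #{g | f g ≠ 0} ≤ #{g | f g = 0} by
    have hsplit := card_filter_add_card_filter_not (s := univ) (fun g => f g ≠ 0)
    simp only [not_not, card_univ] at hsplit
    omega
  rcases (univ.filter fun g => f g ≠ 0).eq_empty_or_nonempty with hempty | ⟨c, hc⟩
  · simp [hempty]
  · have add_eq_zero : ∀ x y : ZMod 2, x ≠ 0 → y ≠ 0 → x + y = 0 := by decide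
    refine card_le_card_of_injOn (· + c) (fun g hg => ?_) (add_left_injective c).injOn
    simp only [coe_filter, mem_univ, true_and, Set.mem_ofPred_eq, map_add] at hg ⊢
    exact add_eq_zero _ _ hg (mem_filter.1 hc).2

theorem sum_hammingNorm_comp_eq_sum_card_filter {α ι : Type*} [Fintype ι] {β : ι → Type*}
    [∀ i, Zero (β i)] [∀ i, DecidableEq (β i)] (s : Finset α) (φ : α → ∀ i, β i) :
    ∑ x ∈ s, hammingNorm (φ x) = ∑ i, #{x ∈ s | φ x i ≠ 0} := by
  simp only [hammingNorm, card_filter]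
  exact sum_comm

theorem Submodule.two_mul_sum_hammingNorm_le {ι : Type*} [Fintype ι]
    (C : Submodule (ZMod 2) (ι → ZMod 2)) [Fintype C] :
    2 * ∑ v : C, hammingNorm (v : ι → ZMod 2) ≤ Fintype.card ι * Fintype.card C := by
  rw [sum_hammingNorm_comp_eq_sum_card_filter, mul_sum, ← smul_eq_mul, ← card_univ,
    ← sum_const]
  exact sum_le_sum fun i _ =>
    ((LinearMap.proj i ∘ₗ C.subtype).toAddMonoidHom).two_mul_card_ne_zero_le

theorem Submodule.card_sub_one_mul_le_sum_hammingNorm {R ι : Type*} [Fintype ι] [Semiring R]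
    [DecidableEq R] (C : Submodule R (ι → R)) [Fintype C] [DecidableEq C] {d : ℕ}
    (hmin : ∀ v ∈ C, v ≠ 0 → d ≤ hammingNorm v) :
    (Fintype.card C - 1) * d ≤ ∑ v : C, hammingNorm (v : ι → R) := by
  have hnonzero : ∀ v ∈ univ.erase (0 : C), d ≤ hammingNorm (v : ι → R) := fun v hv =>
    hmin v v.2 (by simpa using ne_of_mem_erase hv)
  calc (Fintype.card C - 1) * d = #(univ.erase (0 : C)) • d := by
        rw [card_erase_of_mem (mem_univ 0), card_univ, smul_eq_mul]
    _ ≤ ∑ v ∈ univ.erase (0 : C), hammingNorm (v : ι → R) := card_nsmul_le_sum _ _ _ hnonzero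
    _ = ∑ v : C, hammingNorm (v : ι → R) := sum_erase _ (by simp)

/-- Every binary linear [21,5,10] code contains a codeword of weight exactly 10. -/
theorem exists_weight_ten_21_5_10
    (C : Submodule (ZMod 2) (Fin 21 → ZMod 2))
    (hdim : Module.finrank (ZMod 2) C = 5)
    (hmin : ∀ v ∈ C, v ≠ 0 → 10 ≤ hammingNorm v) :
    ∃ v ∈ C, hammingNorm v = 10 := by
  classical
  by_contra! hno_ten
  have hmin_eleven : ∀ v ∈ C, v ≠ 0 → 11 ≤ hammingNorm v := fun v hv hv0 =>
    (hmin v hv hv0).lt_of_ne' (hno_ten v hv)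
  have hcard : Fintype.card C = 32 := by
    rw [Module.card_eq_pow_finrank (K := ZMod 2), hdim, ZMod.card]; rfl
  have hupper := C.two_mul_sum_hammingNorm_le
  have hlower := C.card_sub_one_mul_le_sum_hammingNorm hmin_eleven
  rw [hcard, Fintype.card_fin] at hupper
  rw [hcard] at hlower
  omega
end

section
/- No binary linear [21,5,10] code contains a codeword of Hamming weight 20. -/
/-!
A word `v` of weight 20 vanishes at exactly one coordinate `i₀`; pick `i₁` with `v i₁ ≠ 0`.
Every nonzero codeword `w` vanishing at `i₀` and `i₁` has support inside that of `v`, so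
`wt (v + w) = 20 - wt w`, and as `v + w ≠ 0` both weights are at least 10: `wt w = 10`.
These codewords form a subcode of dimension at least 3 all of whose nonzero words have the same
weight, and over `𝔽₂` the identity `wt (x + y) = wt x + wt y - 2 wt (x * y)` forces that weight
to be divisible by 4.
-/

open Finset Module

section Weights

variable {ι : Type*} [Fintype ι]

theorem hammingNorm_add_add_two_mul_hammingNorm_mul (x y : ι → ZMod 2) :
    hammingNorm (x + y) + 2 * hammingNorm (x * y) = hammingNorm x + hammingNorm y := by
  simp only [hammingNorm, card_filter, mul_sum, ← sum_add_distrib, Pi.add_apply, Pi.mul_apply]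
  refine sum_congr rfl fun i _ => ?_
  generalize x i = a
  generalize y i = b
  fin_cases a <;> fin_cases b <;> rfl

theorem hammingNorm_add_add_hammingNorm_of_support_subset {v w : ι → ZMod 2}
    (h : Function.support w ⊆ Function.support v) :
    hammingNorm (v + w) + hammingNorm w = hammingNorm v := by
  have hvw : v * w = w := by
    ext i
    by_cases hw : w i = 0
    · simp [hw]
    · rw [Pi.mul_apply, show v i = 1 from Fin.eq_one_of_ne_zero (v i) (h hw), one_mul]
  have := hammingNorm_add_add_two_mul_hammingNorm_mul v w
  rw [hvw] at this
  omega

theorem exists_forall_eq_zero_iff_of_hammingNorm_add_one {v : ι → ZMod 2}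
    (hv : hammingNorm v + 1 = Fintype.card ι) : ∃ i₀, ∀ i, v i = 0 ↔ i = i₀ := by
  have hzeros : #{i | v i = 0} = 1 := by
    have := card_filter_add_card_filter_not (s := univ) (fun i => v i = 0)
    rw [card_univ] at this
    simp only [hammingNorm, ne_eq] at hv
    omega
  obtain ⟨i₀, h⟩ := card_eq_one.mp hzeros
  exact ⟨i₀, fun i => by simpa using congrArg (i ∈ ·) h⟩

theorem four_dvd_of_hammingNorm_smul_add_smul_add_smul_eq {x y z : ι → ZMod 2} {d : ℕ}
    (h : ∀ a b c : ZMod 2, (a, b, c) ≠ 0 → hammingNorm (a • x + b • y + c • z) = d) :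
    4 ∣ d := by
  have hx := h 1 0 0 (by decide)
  have hy := h 0 1 0 (by decide)
  have hz := h 0 0 1 (by decide)
  have hxy := h 1 1 0 (by decide)
  have hxz := h 1 0 1 (by decide)
  have hyz := h 0 1 1 (by decide)
  have hxyz := h 1 1 1 (by decide)
  simp only [one_smul, zero_smul, add_zero, zero_add] at hx hy hz hxy hxz hyz hxyz
  have hzz : z * z = z := by
    ext i
    rw [Pi.mul_apply]
    generalize z i = a
    fin_cases a <;> rfl
  -- `d = 2 wt ((x + y) * z)`, and since `(x + y) * z = x * z + y * z` with `z * z = z`,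
  -- also `wt ((x + y) * z) = 2 wt (x * y * z)`
  have e1 := hammingNorm_add_add_two_mul_hammingNorm_mul x z
  have e2 := hammingNorm_add_add_two_mul_hammingNorm_mul y z
  have e3 := hammingNorm_add_add_two_mul_hammingNorm_mul (x + y) z
  have e4 := hammingNorm_add_add_two_mul_hammingNorm_mul (x * z) (y * z)
  rw [← add_mul, mul_mul_mul_comm, hzz] at e4
  omega

theorem Submodule.four_dvd_of_forall_hammingNorm_eq {D : Submodule (ZMod 2) (ι → ZMod 2)}
    (hD : 3 ≤ finrank (ZMod 2) D) {d : ℕ} (hd : ∀ w ∈ D, w ≠ 0 → hammingNorm w = d) :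
    4 ∣ d := by
  obtain ⟨f, hf⟩ := exists_linearIndependent_of_le_finrank hD
  refine four_dvd_of_hammingNorm_smul_add_smul_add_smul_eq (x := f 0) (y := f 1) (z := f 2)
    fun a b c habc => hd _ (a • f 0 + b • f 1 + c • f 2).2 ?_
  intro h0
  have := Fintype.linearIndependent_iff.mp hf ![a, b, c]
    (by simpa [Fin.sum_univ_three] using Subtype.ext h0)
  exact habc (by simpa using ⟨this 0, this 1, this 2⟩)

end Weights

theorem Submodule.finrank_le_finrank_inf_ker_add_one {K V : Type*} [DivisionRing K]
    [AddCommGroup V] [Module K V] [FiniteDimensional K V] (C : Submodule K V) (f : V →ₗ[K] K) :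
    finrank K C ≤ finrank K ↥(C ⊓ LinearMap.ker f) + 1 := by
  have hsup := C.finrank_sup_add_finrank_inf_eq (LinearMap.ker f)
  have hsup_le := (C ⊔ LinearMap.ker f).finrank_le
  have hrank := f.finrank_range_add_finrank_ker
  have hrange := (LinearMap.range f).finrank_le
  rw [finrank_self] at hrange
  omega

/-- No binary linear [21,5,10] code contains a codeword of Hamming weight 20. -/
theorem no_weight_20_in_21_5_10
    (C : Submodule (ZMod 2) (Fin 21 → ZMod 2))
    (hdim : Module.finrank (ZMod 2) C = 5)
    (hmin : ∀ v ∈ C, v ≠ 0 → 10 ≤ hammingNorm v) :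
    ∀ v ∈ C, hammingNorm v ≠ 20 := by
  intro v hvC hv
  obtain ⟨i₀, hi₀⟩ : ∃ i₀, ∀ i, v i = 0 ↔ i = i₀ :=
    exists_forall_eq_zero_iff_of_hammingNorm_add_one (by simp [hv])
  obtain ⟨i₁, hi₁⟩ := Function.ne_iff.mp (hammingNorm_ne_zero_iff.mp (by rw [hv]; decide))
  have hD : 3 ≤ finrank (ZMod 2)
      ↥(C ⊓ LinearMap.ker (LinearMap.proj i₀) ⊓ LinearMap.ker (LinearMap.proj i₁)) := by
    have h₀ := C.finrank_le_finrank_inf_ker_add_one (LinearMap.proj i₀)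
    have h₁ := (C ⊓ LinearMap.ker (LinearMap.proj i₀)).finrank_le_finrank_inf_ker_add_one
      (LinearMap.proj i₁)
    omega
  refine absurd (Submodule.four_dvd_of_forall_hammingNorm_eq hD ?_) (by decide : ¬4 ∣ 10)
  rintro w ⟨⟨hwC, hw₀⟩, hw₁⟩ hw
  simp only [SetLike.mem_coe, LinearMap.mem_ker, LinearMap.coe_proj,
    Function.eval] at hw₀ hw₁
  have hsupp : Function.support w ⊆ Function.support v := fun i hwi hvi =>
    hwi ((hi₀ i).mp hvi ▸ hw₀)
  have hvw : v + w ≠ 0 := fun h => hi₁ (by simpa [hw₁] using congrFun h i₁)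
  have hsum := hammingNorm_add_add_hammingNorm_of_support_subset hsupp
  have hvw_ge := hmin _ (C.add_mem hvC hwC) hvw
  have hw_ge := hmin w hwC hw
  omega
end

section
/- No binary linear [21,5,10] code contains a codeword of Hamming weight 18. -/
/-!
Let `v` be a codeword of weight 18 and `Z` its zero set, of size 3. The codewords vanishing on
`Z` form a subspace of dimension at least `5 - 3 = 2`, so one of them, `u`, lies outside
`{0, v}`. Over `𝔽₂` the supports of `u` and `v - u` then partition the support of `v`, so
`wt u + wt (v - u) = 18`, while both weights are at least 10.
-/

open Finset Module

theorem card_filter_eq_zero_add_hammingNorm {ι : Type*} [Fintype ι] {β : Type*} [Zero β]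
    [DecidableEq β] (v : ι → β) :
    #{i | v i = 0} + hammingNorm v = Fintype.card ι :=
  card_filter_add_card_filter_not _

theorem hammingNorm_sub_add_hammingNorm_of_support_subset {ι : Type*} [Fintype ι]
    {u v : ι → ZMod 2} (huv : ∀ i, v i = 0 → u i = 0) :
    hammingNorm (v - u) + hammingNorm u = hammingNorm v := by
  classical
  have hsplit : ∀ a b : ZMod 2, (a = 0 → b = 0) →
      ((a - b ≠ 0 ∨ b ≠ 0) ↔ a ≠ 0) ∧ ¬(a - b ≠ 0 ∧ b ≠ 0) := by decide
  unfold hammingNorm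
  rw [← card_union_of_disjoint]
  · congr 1
    ext i
    simpa only [mem_union, mem_filter, mem_univ, true_and, Pi.sub_apply]
      using (hsplit (v i) (u i) (huv i)).1
  · exact disjoint_filter.mpr fun i _ hvu hu => (hsplit (v i) (u i) (huv i)).2 ⟨hvu, hu⟩

/-- The codewords vanishing on `s` have codimension at most `#s` in `C`. -/
theorem Submodule.exists_mem_forall_eq_zero_notMem_span_singleton {K ι : Type*} [Field K]
    (C : Submodule K (ι → K)) (s : Finset ι) (v : ι → K) (h : #s + 1 < finrank K C) :
    ∃ u ∈ C, (∀ i ∈ s, u i = 0) ∧ u ∉ K ∙ v := by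
  have : FiniteDimensional K C := Module.finite_of_finrank_pos (by omega)
  let restrict : C →ₗ[K] (s → K) := LinearMap.funLeft K K (↑) ∘ₗ C.subtype
  have hker : 1 < finrank K (LinearMap.ker restrict) := by
    have hrank := restrict.finrank_range_add_finrank_ker
    have hrange := (LinearMap.range restrict).finrank_le
    simp only [finrank_pi, Fintype.card_coe] at hrange
    omega
  have hspan : finrank K (K ∙ v) ≤ 1 := by
    simpa using finrank_span_le_card (R := K) ({v} : Set (ι → K))
  have hnle : ¬(LinearMap.ker restrict).map C.subtype ≤ K ∙ v := fun hle => by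
    have := Submodule.finrank_mono hle
    rw [Submodule.finrank_map_subtype_eq] at this
    omega
  obtain ⟨u, hu, hnot⟩ := SetLike.not_le_iff_exists.mp hnle
  obtain ⟨c, hc, rfl⟩ := Submodule.mem_map.mp hu
  exact ⟨c, c.2, fun i hi => congrFun (LinearMap.mem_ker.mp hc) ⟨i, hi⟩, hnot⟩

/-- No binary linear [21,5,10] code contains a codeword of Hamming weight 18. -/
theorem no_weight_18_in_21_5_10
    (C : Submodule (ZMod 2) (Fin 21 → ZMod 2))
    (hdim : Module.finrank (ZMod 2) C = 5)
    (hmin : ∀ v ∈ C, v ≠ 0 → 10 ≤ hammingNorm v) :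
    ∀ v ∈ C, hammingNorm v ≠ 18 := by
  intro v hv h18
  have hZ := card_filter_eq_zero_add_hammingNorm v
  rw [h18, Fintype.card_fin] at hZ
  obtain ⟨u, huC, huZ, hu⟩ :=
    C.exists_mem_forall_eq_zero_notMem_span_singleton {i | v i = 0} v (by omega)
  have hu0 : u ≠ 0 := by
    rintro rfl
    exact hu (Submodule.zero_mem _)
  have hvu0 : v - u ≠ 0 :=
    sub_ne_zero.mpr fun h => hu (h ▸ Submodule.mem_span_singleton_self v)
  have hsum := hammingNorm_sub_add_hammingNorm_of_support_subset (u := u) (v := v)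
    fun i hi => huZ i (by simpa using hi)
  have := hmin u huC hu0
  have := hmin (v - u) (C.sub_mem hv huC) hvu0
  omega
end

section
/- Let D be a binary linear code with automorphism subgroup G acting on V = F_2^m, inducing an action of G on lexicographically ordered j-element sequences of vectors from V. If x = (v_1,...,v_j) is G-minimal (meaning g·x >= x in lexicographic order for all g in G) and admissible, then the truncation (v_1,...,v_{j-1}) is G-minimal. -/
/-- The natural linear order on `F_2 = ZMod 2` (with `0 < 1`). -/
noncomputable instance : LinearOrder (ZMod 2) := inferInstanceAs (LinearOrder (Fin 2))

/-- The strict lexicographic order on `V = F_2^m`. -/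
def vlt {m : ℕ} (a b : Fin m → ZMod 2) : Prop :=
  Pi.Lex (· < ·) (· < ·) a b

/-- The (non-strict) lexicographic order on `V = F_2^m`. -/
def vle {m : ℕ} (a b : Fin m → ZMod 2) : Prop :=
  vlt a b ∨ a = b

/-- The (non-strict) lexicographic order on sequences of vectors of `V`. -/
def seqLE {m : ℕ} (x y : List (Fin m → ZMod 2)) : Prop :=
  List.Lex vlt x y ∨ x = y

/-- A sequence `x` is `G`-minimal for a bijection `g` of `V` if the result of
acting by `g` elementwise and re-sorting into lexicographic order is `≥ x`. -/
def GMinimalFor {m : ℕ} (g : Equiv.Perm (Fin m → ZMod 2))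
    (x : List (Fin m → ZMod 2)) : Prop :=
  ∀ y : List (Fin m → ZMod 2), y.Perm (x.map g) → y.Pairwise vle → seqLE x y

/-!
Suppose a sorted rearrangement `y` of the image of the truncation `x'` under `f` were
lexicographically below `x'`, first differing from it at position `i`. Inserting the image of the
last entry of `x` into `y` at its sorted place gives a sorted rearrangement of the image of `x`
that is still below `x`, contradicting minimality: an insertion after position `i` changes nothing
up to `i`, and by sortedness of `y` an earlier one replaces each entry up to position `i` by one no
larger, the entry at `i` by one smaller than the entry of `x` there.
-/

namespace List

variable {α : Type*} {r : α → α → Prop}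

-- The reflexive closure is spelled as in `vle`, so that `GMinimalFor g` unfolds to
-- `IsLexMinimalUnder vlt g`.
def IsLexMinimalUnder (r : α → α → Prop) (f : α → α) (x : List α) : Prop :=
  ∀ y : List α, y ~ x.map f → y.Pairwise (fun a b => r a b ∨ a = b) → Lex r x y ∨ x = y

theorem orderedInsert_eq_cons_of_pairwise [DecidableRel r] {a : α} {l : List α}
    (h : (a :: l).Pairwise r) : l.orderedInsert r a = a :: l := by
  cases l with
  | nil => rfl
  | cons b l => exact orderedInsert_cons_of_le r l (rel_of_pairwise_cons h mem_cons_self)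

theorem lex_orderedInsert_of_lex_dropLast [IsTrans α r]
    [DecidableRel (fun a b : α => r a b ∨ a = b)] (z : α) {x y : List α}
    (hy : y.Pairwise (fun a b => r a b ∨ a = b)) (hlen : y.length + 1 = x.length)
    (hlt : Lex r y x.dropLast) : Lex r (y.orderedInsert (fun a b => r a b ∨ a = b) z) x := by
  induction x generalizing y with
  | nil => simp at hlen
  | cons a xs ih =>
    rcases xs with _ | ⟨a', xs⟩
    · simp at hlt
    rcases y with _ | ⟨b, ys⟩
    · simp at hlen
    rw [dropLast_cons_cons] at hlt
    cases hlt with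
    | cons hlt =>
      have ih' := ih hy.of_cons (by simpa using hlen) hlt
      rw [orderedInsert_cons]
      split_ifs with hza
      · rcases hza with hza | rfl
        · exact .rel hza
        · exact .cons (orderedInsert_eq_cons_of_pairwise hy ▸ ih')
      · exact .cons ih'
    | rel hba =>
      rw [orderedInsert_cons]
      split_ifs with hzb
      · exact .rel (hzb.elim (_root_.trans · hba) (· ▸ hba))
      · exact .rel hba

theorem IsLexMinimalUnder.dropLast [IsStrictTotalOrder α r] {f : α → α} {x : List α}
    (hmin : IsLexMinimalUnder r f x) : IsLexMinimalUnder r f x.dropLast := by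
  classical
  have : Std.Total (fun a b : α => r a b ∨ a = b) := ⟨fun a b => by
    rcases trichotomous_of r a b with h | rfl | h
    exacts [.inl (.inl h), .inl (.inr rfl), .inr (.inl h)]⟩
  have : IsTrans α (fun a b => r a b ∨ a = b) := ⟨fun a b c hab hbc => by
    rcases hab with hab | rfl <;> rcases hbc with hbc | rfl
    exacts [.inl (_root_.trans hab hbc), .inl hab, .inl hbc, .inr rfl]⟩
  intro y hperm hy
  rcases eq_or_ne x [] with rfl | hne
  · exact .inr (perm_nil.mp hperm).symm
  refine (or_assoc.mpr (trichotomous_of (Lex r) x.dropLast y)).resolve_right fun hyx => ?_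
  set z := f (x.getLast hne)
  have hperm' : y.orderedInsert (fun a b => r a b ∨ a = b) z ~ x.map f :=
    calc y.orderedInsert _ z ~ z :: y := perm_orderedInsert _ z y
      _ ~ z :: x.dropLast.map f := hperm.cons z
      _ ~ x.dropLast.map f ++ [z] := (perm_append_singleton z _).symm
      _ = x.map f := by rw [← map_singleton, ← map_append, dropLast_append_getLast]
  have hlen : y.length + 1 = x.length := by
    rw [hperm.length_eq, length_map, length_dropLast, Nat.sub_add_cancel (length_pos_iff.mpr hne)]
  have hlt := lex_orderedInsert_of_lex_dropLast z hy hlen hyx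
  rcases hmin _ hperm' (hy.orderedInsert z y) with hgt | heq
  · exact _root_.asymm hgt hlt
  · exact irrefl _ (heq ▸ hlt)

end List

instance {m : ℕ} : IsStrictTotalOrder (Fin m → ZMod 2) vlt where
  trichotomous := (Pi.trichotomous_lex _ _ wellFounded_lt).trichotomous
  irrefl := Pi.Lex.isStrictOrder.irrefl
  trans := Pi.Lex.isStrictOrder.trans

theorem truncation_G_minimal_general {n m : ℕ}
    (G : Subgroup (Equiv.Perm (Fin n)))
    (φ : G →* Equiv.Perm (Fin m → ZMod 2))
    (x : List (Fin m → ZMod 2))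
    (hmin : ∀ g : G, GMinimalFor (φ g) x) :
    ∀ g : G, GMinimalFor (φ g) x.dropLast :=
  fun g => List.IsLexMinimalUnder.dropLast (hmin g)

/-- Truncation preserves `G`-minimality.  Let `D` be a binary linear code with
automorphism subgroup `G` inducing (via a homomorphism `φ`) an action on
`V = F_2^m`, and hence on lexicographically ordered `j`-element sequences of
vectors of `V` (a sequence is acted on elementwise and then re-sorted into
lexicographic order).  If a lexicographically ordered sequence
`x = (v_1, …, v_j)` is admissible and `G`-minimal — i.e. `g • x ≥ x` for all
`g ∈ G` — then its truncation `(v_1, …, v_{j-1})`, obtained by discarding the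
rightmost element, is again `G`-minimal. -/
theorem truncation_G_minimal {n m j : ℕ}
    (D : Submodule (ZMod 2) (Fin n → ZMod 2))
    (G : Subgroup (Equiv.Perm (Fin n)))
    (hG : ∀ σ ∈ G, Submodule.map (LinearMap.funLeft (ZMod 2) (ZMod 2) σ) D = D)
    (φ : G →* Equiv.Perm (Fin m → ZMod 2))
    (Admissible : List (Fin m → ZMod 2) → Prop)
    (x : List (Fin m → ZMod 2))
    (hlen : x.length = j)
    (hsorted : x.Pairwise vle)
    (hadm : Admissible x)
    (hmin : ∀ g : G, GMinimalFor (φ g) x) :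
    ∀ g : G, GMinimalFor (φ g) x.dropLast :=
  truncation_G_minimal_general G φ x hmin
end

section
/- Every binary linear [31,13,10] even code whose dual code has minimum weight at least 7 contains a codeword of Hamming weight exactly 20. -/
/-!
Dual distance at least 7 makes `C` an orthogonal array of strength 6: restricted to any `t ≤ 6`
coordinates, the codewords take every value equally often. Hence the factorial moments
`∑ v ∈ C, (wt v)(wt v - 1)⋯(wt v - t + 1)` for `t ≤ 6` do not depend on `C`, and neither does
`∑ v ∈ C, Q (wt v) = 5160960` for `Q w = (w - 10)(w - 12)(w - 14)(w - 16)(w - 18)(w - 22)`.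
The zero word alone contributes `Q 0 = 10644480`, so some nonzero codeword has `Q (wt v) < 0`;
among even weights `≥ 10` this forces `wt v = 20`.
-/

open Finset

theorem choose_hammingNorm_eq_card_filter {ι M : Type*} [Fintype ι] [Zero M] [DecidableEq M]
    (v : ι → M) (t : ℕ) :
    (hammingNorm v).choose t = #{S ∈ powersetCard t univ | ∀ i ∈ S, v i ≠ 0} := by
  rw [hammingNorm, ← card_powersetCard]
  congr 1
  ext S
  simp [mem_powersetCard, subset_iff, and_comm]

theorem card_fiber_mul_card_eq_card_of_surjective {V W F : Type*} [AddGroup V] [AddGroup W]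
    [Fintype V] [Fintype W] [DecidableEq W] [FunLike F V W] [AddMonoidHomClass F V W] {φ : F}
    (hφ : Function.Surjective φ) (w : W) :
    #{v | φ v = w} * Fintype.card W = Fintype.card V := by
  have hfiber : ∀ w, #{v | φ v = w} = #{v | φ v = 0} := fun w => by
    obtain ⟨v₀, rfl⟩ := hφ w
    refine card_nbij' (· - v₀) (· + v₀) ?_ ?_ ?_ ?_ <;> intro v <;> simp [sub_eq_zero]
  calc #{v | φ v = w} * Fintype.card W = ∑ w' : W, #{v | φ v = w'} := by
        rw [sum_congr rfl fun w' _ => hfiber w', sum_const, card_univ, smul_eq_mul, hfiber w,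
          mul_comm]
    _ = Fintype.card V := by rw [sum_card_fiberwise_eq_card_filter]; simp

section

variable {K ι : Type*} [Field K] [DecidableEq K] [Fintype ι]

theorem surjective_restrict_of_dual_weight {C : Submodule K (ι → K)} {s : ℕ}
    (hdual : ∀ w : ι → K, (∀ v ∈ C, v ⬝ᵥ w = 0) → w ≠ 0 → s < hammingNorm w)
    {S : Finset ι} (hS : #S ≤ s) :
    Function.Surjective ((LinearMap.funLeft K K ((↑) : S → ι)).domRestrict C) := by
  classical
  rw [← LinearMap.range_eq_top, LinearMap.range_domRestrict]
  by_contra hne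
  -- a nonzero functional killing the restricted code is a dual codeword supported on `S`
  obtain ⟨f, hf, hfC⟩ := Submodule.exists_dual_map_eq_bot_of_lt_top
    (lt_top_iff_ne_top.2 hne) inferInstance
  set g := (dotProductEquiv K S).symm f
  have hfg : f = dotProductEquiv K S g := ((dotProductEquiv K S).apply_symm_apply f).symm
  let w : ι → K := fun i => if h : i ∈ S then g ⟨i, h⟩ else 0
  have hw : ∀ x : ι → K, x ⬝ᵥ w = f (LinearMap.funLeft K K ((↑) : S → ι) x) := fun x =>
    calc x ⬝ᵥ w = ∑ i ∈ S, x i * w i :=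
          (sum_subset (subset_univ S) fun i _ hi => by simp [w, hi]).symm
      _ = ∑ i : S, x i * g i := by
          rw [← sum_coe_sort S]
          exact sum_congr rfl fun i _ => by simp [w]
      _ = f (LinearMap.funLeft K K ((↑) : S → ι) x) := by
          rw [hfg, dotProductEquiv_apply_apply, dotProduct_comm]
          rfl
  have horth : ∀ v ∈ C, v ⬝ᵥ w = 0 := fun v hv => by
    rw [hw, ← Submodule.mem_bot K, ← hfC]
    exact Submodule.mem_map_of_mem (Submodule.mem_map_of_mem hv)
  have hw0 : w ≠ 0 := fun h => by
    have hg : g = 0 := funext fun i => by simpa [w] using congrFun h i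
    exact hf (by rw [hfg, hg, map_zero])
  have hsupp : hammingNorm w ≤ #S :=
    card_le_card fun i hi => by
      by_contra hiS
      simp [w, hiS] at hi
  exact absurd (hdual w horth hw0) (by omega)

theorem card_filter_forall_ne_zero_mul_pow [Fintype K] {C : Submodule K (ι → K)} [Fintype C]
    {s : ℕ} (hdual : ∀ w : ι → K, (∀ v ∈ C, v ⬝ᵥ w = 0) → w ≠ 0 → s < hammingNorm w)
    {S : Finset ι} (hS : #S ≤ s) :
    #{v : C | ∀ i ∈ S, (v : ι → K) i ≠ 0} * Fintype.card K ^ #S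
      = (Fintype.card K - 1) ^ #S * Fintype.card K ^ Module.finrank K C := by
  classical
  set φ := (LinearMap.funLeft K K ((↑) : S → ι)).domRestrict C
  set T := Fintype.piFinset fun _ : S => univ.erase (0 : K)
  have hcount : #{v : C | φ v ∈ T} * Fintype.card K ^ #S
      = (Fintype.card K - 1) ^ #S * Fintype.card K ^ Module.finrank K C := by
    rw [← sum_card_fiberwise_eq_card_filter, sum_mul,
      show Fintype.card K ^ #S = Fintype.card (S → K) by simp,
      sum_congr rfl fun c _ => card_fiber_mul_card_eq_card_of_surjective
        (surjective_restrict_of_dual_weight hdual hS) c,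
      sum_const, Module.card_eq_pow_finrank (K := K) (V := C)]
    simp [T]
  convert hcount using 3
  ext v
  simp [φ, T]

theorem sum_choose_hammingNorm_mul_pow [Fintype K] {C : Submodule K (ι → K)} [Fintype C]
    {s t : ℕ} (hdual : ∀ w : ι → K, (∀ v ∈ C, v ⬝ᵥ w = 0) → w ≠ 0 → s < hammingNorm w)
    (ht : t ≤ s) :
    (∑ v : C, (hammingNorm (v : ι → K)).choose t) * Fintype.card K ^ t
      = (Fintype.card ι).choose t
        * ((Fintype.card K - 1) ^ t * Fintype.card K ^ Module.finrank K C) :=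
  calc (∑ v : C, (hammingNorm (v : ι → K)).choose t) * Fintype.card K ^ t
      = ∑ S ∈ powersetCard t univ,
          #{v : C | ∀ i ∈ S, (v : ι → K) i ≠ 0} * Fintype.card K ^ #S := by
        simp_rw [choose_hammingNorm_eq_card_filter, card_filter]
        rw [sum_comm, sum_mul]
        exact sum_congr rfl fun S hS => by rw [(mem_powersetCard.1 hS).2]
    _ = ∑ S ∈ powersetCard t univ,
          (Fintype.card K - 1) ^ t * Fintype.card K ^ Module.finrank K C :=
        sum_congr rfl fun S hS => by
          rw [card_filter_forall_ne_zero_mul_pow hdual ((mem_powersetCard.1 hS).2.trans_le ht),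
            (mem_powersetCard.1 hS).2]
    _ = _ := by rw [sum_const, card_powersetCard, card_univ, smul_eq_mul]

theorem sum_descFactorial_hammingNorm_mul_pow [Fintype K] {C : Submodule K (ι → K)}
    [Fintype C] {s t : ℕ}
    (hdual : ∀ w : ι → K, (∀ v ∈ C, v ⬝ᵥ w = 0) → w ≠ 0 → s < hammingNorm w) (ht : t ≤ s) :
    (∑ v : C, (hammingNorm (v : ι → K)).descFactorial t) * Fintype.card K ^ t
      = (Fintype.card ι).descFactorial t
        * ((Fintype.card K - 1) ^ t * Fintype.card K ^ Module.finrank K C) := by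
  simp_rw [Nat.descFactorial_eq_factorial_mul_choose, ← mul_sum, mul_assoc,
    sum_choose_hammingNorm_mul_pow hdual ht]

end

def weightTestPoly (w : ℕ) : ℤ :=
  (w - 10) * (w - 12) * (w - 14) * (w - 16) * (w - 18) * (w - 22)

theorem weightTestPoly_eq_sum_descFactorial (w : ℕ) :
    weightTestPoly w = ∑ t : Fin 7,
      ![10644480, -3752595, 580755, -50610, 2625, -77, 1] t * (w.descFactorial t : ℤ) := by
  simp only [← descPochhammer_eval_eq_descFactorial, descPochhammer_eval_eq_prod_range]
  simp [weightTestPoly, Fin.sum_univ_succ, prod_range_succ]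
  ring

theorem weightTestPoly_nonneg {w : ℕ} (h10 : 10 ≤ w) (heven : Even w) (h20 : w ≠ 20) :
    0 ≤ weightTestPoly w := by
  rcases le_or_gt w 22 with hw | hw
  · interval_cases w <;> simp_all [weightTestPoly, Nat.even_iff]
  · have : (23 : ℤ) ≤ w := by exact_mod_cast hw
    unfold weightTestPoly
    refine mul_nonneg (mul_nonneg (mul_nonneg (mul_nonneg (mul_nonneg ?_ ?_) ?_) ?_) ?_) ?_ <;>
      linarith

theorem sum_weightTestPoly_hammingNorm {C : Submodule (ZMod 2) (Fin 31 → ZMod 2)} [Fintype C]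
    (hdim : Module.finrank (ZMod 2) C = 13)
    (hdual : ∀ w : Fin 31 → ZMod 2, (∀ v ∈ C, v ⬝ᵥ w = 0) → w ≠ 0 → 6 < hammingNorm w) :
    ∑ v : C, weightTestPoly (hammingNorm (v : Fin 31 → ZMod 2)) = 5160960 := by
  have hmoment : ∀ t : Fin 7, ∑ v : C, ((hammingNorm (v : Fin 31 → ZMod 2)).descFactorial t : ℤ)
      = (31 : ℕ).descFactorial t * 2 ^ (13 - (t : ℕ)) := fun t => by
    have h := sum_descFactorial_hammingNorm_mul_pow hdual (Nat.le_of_lt_succ t.isLt)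
    simp only [ZMod.card, Fintype.card_fin, hdim, Nat.add_one_sub_one, one_pow, one_mul] at h
    rw [← pow_sub_mul_pow 2 (by omega : (t : ℕ) ≤ 13), ← mul_assoc] at h
    exact_mod_cast Nat.eq_of_mul_eq_mul_right (by positivity) h
  simp_rw [weightTestPoly_eq_sum_descFactorial]
  rw [sum_comm]
  simp_rw [← mul_sum, hmoment]
  simp [Fin.sum_univ_succ, Nat.descFactorial]

/-- Every even binary linear [31,13,10] code whose dual code has minimum
weight at least 7 contains a codeword of Hamming weight exactly 20. -/
theorem even_31_13_10_has_weight20_word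
    (C : Submodule (ZMod 2) (Fin 31 → ZMod 2))
    (hdim : Module.finrank (ZMod 2) C = 13)
    (hmin : ∀ v ∈ C, v ≠ 0 → 10 ≤ hammingNorm v)
    (heven : ∀ v ∈ C, Even (hammingNorm v))
    (hdual : ∀ w : Fin 31 → ZMod 2, (∀ v ∈ C, dotProduct v w = 0) → w ≠ 0 →
      7 ≤ hammingNorm w) :
    ∃ v ∈ C, hammingNorm v = 20 := by
  have := Fintype.ofFinite C
  by_contra! hno
  have hnonneg : ∀ v ∈ univ.erase (0 : C),
      0 ≤ weightTestPoly (hammingNorm (v : Fin 31 → ZMod 2)) := fun v hv => by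
    have hv0 : (v : Fin 31 → ZMod 2) ≠ 0 := Submodule.coe_eq_zero.not.2 (ne_of_mem_erase hv)
    exact weightTestPoly_nonneg (hmin v v.2 hv0) (heven v v.2) (hno v v.2)
  have hsum := sum_weightTestPoly_hammingNorm hdim hdual
  rw [← add_sum_erase _ _ (mem_univ 0)] at hsum
  have hzero : weightTestPoly (hammingNorm ((0 : C) : Fin 31 → ZMod 2)) = 10644480 := by
    simp [weightTestPoly]
  linarith [sum_nonneg hnonneg]
end
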